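/- Let (p,w) ∈ W and suppose the family ((λ_s, p_s, w_s, a_s)) indexed by s ∈ S is feasible at (p,w) and attains the supremum defining T(V*)(p,w). Then for every s ∈ S with λ_s > 0 and a_s ≠ a*, one has V*(p_s, w_s) = 0. -/

import Mathlib

noncomputable section

/-- Expected payoff of action `a` at belief `p` (= probability of state `ω₁`, encoded `true`). -/
def euP {A : Type*} (u : A → Bool → ℝ) (a : A) (p : ℝ) : ℝ :=
  (1 - p) * u a false + p * u a true

/-- The agent's best static payoff `m(p)` at belief `p`. -/
def mFun {A : Type*} [Fintype A] [Nonempty A] (u : A → Bool → ℝ) (p : ℝ) : ℝ :=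
  Finset.univ.sup' Finset.univ_nonempty (fun a => euP u a p)

/-- The agent's full-information payoff `M(p)` at belief `p`. -/
def MFun {A : Type*} [Fintype A] [Nonempty A] (u : A → Bool → ℝ) (p : ℝ) : ℝ :=
  (1 - p) * Finset.univ.sup' Finset.univ_nonempty (fun a => u a false)
    + p * Finset.univ.sup' Finset.univ_nonempty (fun a => u a true)

/-- The set `W` of pairs (belief, promised utility). -/
def Wset {A : Type*} [Fintype A] [Nonempty A] (u : A → Bool → ℝ) : Set (ℝ × ℝ) :=
  {pw | pw.1 ∈ Set.Icc (0 : ℝ) 1 ∧ mFun u pw.1 ≤ pw.2 ∧ pw.2 ≤ MFun u pw.1}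

/-- A family: for each signal a probability, a posterior belief, a promised continuation
utility, and a recommended action. -/
structure Fam (A S : Type*) where
  prob : S → ℝ
  belief : S → ℝ
  promise : S → ℝ
  act : S → A

/-- Feasibility of the family `f` at the point `pw = (p, w) ∈ W`. -/
def Feasible {A S : Type*} [Fintype A] [Nonempty A] [Fintype S]
    (u : A → Bool → ℝ) (δ : ℝ) (pw : ℝ × ℝ) (f : Fam A S) : Prop :=
  (∀ s, f.prob s ∈ Set.Icc (0 : ℝ) 1) ∧
  (∀ s, (f.belief s, f.promise s) ∈ Wset u) ∧
  (∀ s, (1 - δ) * euP u (f.act s) (f.belief s) + δ * f.promise s ≥ mFun u (f.belief s)) ∧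
  (∑ s, f.prob s * ((1 - δ) * euP u (f.act s) (f.belief s) + δ * f.promise s) ≥ pw.2) ∧
  (∑ s, f.prob s * f.belief s = pw.1) ∧
  (∑ s, f.prob s = 1)

/-- The principal's payoff from the family `f`, given continuation value function `V`. -/
def famPayoff {A S : Type*} [Fintype S] (v : A → Bool → ℝ) (δ : ℝ) (V : ℝ × ℝ → ℝ)
    (f : Fam A S) : ℝ :=
  ∑ s, f.prob s * ((1 - δ) * euP v (f.act s) (f.belief s) + δ * V (f.belief s, f.promise s))

/-- The Bellman operator `T`. -/
def bellman {A S : Type*} [Fintype A] [Nonempty A] [Fintype S]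
    (u v : A → Bool → ℝ) (δ : ℝ) (V : ℝ × ℝ → ℝ) (pw : ℝ × ℝ) : ℝ :=
  sSup {x | ∃ f : Fam A S, Feasible u δ pw f ∧ x = famPayoff v δ V f}

/-- `V` is bounded on `W`. -/
def BddOnW {A : Type*} [Fintype A] [Nonempty A] (u : A → Bool → ℝ) (V : ℝ × ℝ → ℝ) : Prop :=
  ∃ C : ℝ, ∀ pw ∈ Wset u, |V pw| ≤ C

/-!
Two properties of `V*` on `W` drive the argument: it is nonnegative and concave. Both are
preserved by `T` and pass to the limit of value iteration `Tⁿ 0 → V*`. Concavity is preserved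
because two families can be mixed and the mixture merged back onto `S`, one signal per
recommended action (`|A| ≤ |S|`); merging keeps feasibility, since payoffs are affine in the
belief and `m` is convex, and it can only raise the principal's value, by Jensen for a concave
continuation value.

Suppose a signal `s` with `a_s ≠ a*` had `V*(p_s, w_s) > 0`. As `v` vanishes off `a*`, the
principal gets only `δ V*(p_s, w_s)` from `s`, while families at `(p_s, w_s)` come arbitrarily
close to `V*(p_s, w_s) = T V*(p_s, w_s)`. Splicing one of them in place of `s` keeps the family
feasible, because it promises the agent at least `w_s`, which is at least what `s` gave him. It
also strictly raises the principal's payoff, and merging back onto `S` then contradicts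
optimality.
-/

open Finset

open Filter Topology in
lemma ConcaveOn.of_tendsto {ι E : Type*} [AddCommMonoid E] [Module ℝ E] {s : Set E}
    {l : Filter ι} [l.NeBot] {g : ι → E → ℝ} {f : E → ℝ} (hg : ∀ i, ConcaveOn ℝ s (g i))
    (hlim : ∀ x ∈ s, Tendsto (fun i => g i x) l (𝓝 (f x))) : ConcaveOn ℝ s f := by
  have hs : Convex ℝ s := (hg (nonempty_of_neBot l).some).1
  refine ⟨hs, fun x hx y hy a b ha hb hab => ?_⟩
  exact le_of_tendsto_of_tendsto (((hlim x hx).const_smul a).add ((hlim y hy).const_smul b))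
    (hlim _ (hs hx hy ha hb hab)) (Eventually.of_forall fun i => (hg i).2 hx hy ha hb hab)

def IsAffineFun (φ : ℝ × ℝ → ℝ) : Prop :=
  ∃ c₀ c₁ c₂ : ℝ, ∀ z, φ z = c₀ + c₁ * z.1 + c₂ * z.2

namespace IsAffineFun

lemma fst : IsAffineFun Prod.fst := ⟨0, 1, 0, fun z => by ring⟩

lemma snd : IsAffineFun Prod.snd := ⟨0, 0, 1, fun z => by ring⟩

lemma add {φ ψ : ℝ × ℝ → ℝ} (hφ : IsAffineFun φ) (hψ : IsAffineFun ψ) :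
    IsAffineFun (fun z => φ z + ψ z) := by
  obtain ⟨c₀, c₁, c₂, hc⟩ := hφ
  obtain ⟨d₀, d₁, d₂, hd⟩ := hψ
  exact ⟨c₀ + d₀, c₁ + d₁, c₂ + d₂, fun z => by simp only [hc, hd]; ring⟩

lemma const_mul {φ : ℝ × ℝ → ℝ} (hφ : IsAffineFun φ) (r : ℝ) :
    IsAffineFun (fun z => r * φ z) := by
  obtain ⟨c₀, c₁, c₂, hc⟩ := hφ
  exact ⟨r * c₀, r * c₁, r * c₂, fun z => by simp only [hc]; ring⟩

lemma map_add_smul {φ : ℝ × ℝ → ℝ} (hφ : IsAffineFun φ) {a b : ℝ} (hab : a + b = 1)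
    (x y : ℝ × ℝ) : φ (a • x + b • y) = a * φ x + b * φ y := by
  obtain ⟨c₀, c₁, c₂, hc⟩ := hφ
  simp only [hc, Prod.fst_add, Prod.snd_add, Prod.smul_fst, Prod.smul_snd, smul_eq_mul]
  linear_combination (-c₀) * hab

lemma sum_mul_map_centerMass {ι : Type*} {φ : ℝ × ℝ → ℝ} (hφ : IsAffineFun φ)
    {t : Finset ι} {w : ι → ℝ} (z : ι → ℝ × ℝ) (hw : ∑ i ∈ t, w i ≠ 0) :
    (∑ i ∈ t, w i) * φ (t.centerMass w z) = ∑ i ∈ t, w i * φ (z i) := by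
  obtain ⟨c₀, c₁, c₂, hc⟩ := hφ
  have hcm : (∑ i ∈ t, w i) • t.centerMass w z = ∑ i ∈ t, w i • z i := by
    rw [centerMass, smul_inv_smul₀ hw]
  have h₁ : (∑ i ∈ t, w i) * (t.centerMass w z).1 = ∑ i ∈ t, w i * (z i).1 := by
    simpa [Prod.fst_sum] using congrArg Prod.fst hcm
  have h₂ : (∑ i ∈ t, w i) * (t.centerMass w z).2 = ∑ i ∈ t, w i * (z i).2 := by
    simpa [Prod.snd_sum] using congrArg Prod.snd hcm
  simp only [hc, mul_add, sum_add_distrib, ← sum_mul, mul_left_comm _ c₁, mul_left_comm _ c₂,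
    ← mul_sum, ← h₁, ← h₂]

end IsAffineFun

section StaticPayoffs

variable {A : Type*} (u : A → Bool → ℝ)

lemma isAffineFun_euP (a : A) : IsAffineFun (fun z => euP u a z.1) :=
  ⟨u a false, u a true - u a false, 0, fun z => by simp only [euP]; ring⟩

lemma abs_euP_le [Fintype A] (a : A) {p : ℝ} (hp : p ∈ Set.Icc (0 : ℝ) 1) :
    |euP u a p| ≤ ∑ b, (|u b false| + |u b true|) := by
  obtain ⟨hp₀, hp₁⟩ := hp
  calc |euP u a p| ≤ (1 - p) * |u a false| + p * |u a true| := by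
        refine (abs_add_le _ _).trans_eq ?_
        rw [abs_mul, abs_mul, abs_of_nonneg (sub_nonneg.2 hp₁), abs_of_nonneg hp₀]
    _ ≤ |u a false| + |u a true| := by nlinarith [abs_nonneg (u a false), abs_nonneg (u a true)]
    _ ≤ ∑ b, (|u b false| + |u b true|) :=
        single_le_sum (f := fun b => |u b false| + |u b true|) (fun b _ => by positivity)
          (mem_univ a)

def agentValue (δ : ℝ) (a : A) (z : ℝ × ℝ) : ℝ := (1 - δ) * euP u a z.1 + δ * z.2

lemma isAffineFun_agentValue (δ : ℝ) (a : A) : IsAffineFun (agentValue u δ a) :=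
  ((isAffineFun_euP u a).const_mul _).add (IsAffineFun.snd.const_mul _)

variable [Fintype A] [Nonempty A]

lemma euP_le_mFun (a : A) (p : ℝ) : euP u a p ≤ mFun u p :=
  le_sup' (fun a => euP u a p) (mem_univ a)

lemma exists_euP_eq_mFun (p : ℝ) : ∃ a, euP u a p = mFun u p := by
  obtain ⟨a, -, ha⟩ := exists_mem_eq_sup' univ_nonempty (fun a => euP u a p)
  exact ⟨a, ha.symm⟩

def bestResponse (p : ℝ) : A := (exists_euP_eq_mFun u p).choose

lemma euP_bestResponse (p : ℝ) : euP u (bestResponse u p) p = mFun u p :=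
  (exists_euP_eq_mFun u p).choose_spec

lemma mFun_zero : mFun u 0 = MFun u 0 := by
  simp [mFun, MFun, euP]

lemma mFun_one : mFun u 1 = MFun u 1 := by
  simp [mFun, MFun, euP]

lemma isAffineFun_MFun : IsAffineFun (fun z => MFun u z.1) :=
  ⟨univ.sup' univ_nonempty (fun a => u a false),
    univ.sup' univ_nonempty (fun a => u a true) - univ.sup' univ_nonempty (fun a => u a false),
    0, fun z => by simp only [MFun]; ring⟩

lemma convex_setOf_mFun_le {φ : ℝ × ℝ → ℝ} (hφ : IsAffineFun φ) :
    Convex ℝ {z : ℝ × ℝ | mFun u z.1 ≤ φ z} := by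
  intro x hx y hy a b ha hb hab
  obtain ⟨c, hc⟩ := exists_euP_eq_mFun u (a • x + b • y).1
  calc mFun u (a • x + b • y).1 = euP u c (a • x + b • y).1 := hc.symm
    _ = a * euP u c x.1 + b * euP u c y.1 := (isAffineFun_euP u c).map_add_smul hab x y
    _ ≤ a * φ x + b * φ y := by
        gcongr
        exacts [(euP_le_mFun u c x.1).trans hx, (euP_le_mFun u c y.1).trans hy]
    _ = φ (a • x + b • y) := (hφ.map_add_smul hab x y).symm

lemma convex_Wset : Convex ℝ (Wset u) := by
  intro x hx y hy a b ha hb hab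
  obtain ⟨⟨hx₀, hx₁⟩, hxm, hxM⟩ := hx
  obtain ⟨⟨hy₀, hy₁⟩, hym, hyM⟩ := hy
  have hfst : (a • x + b • y).1 = a * x.1 + b * y.1 := rfl
  have hsnd : (a • x + b • y).2 = a * x.2 + b * y.2 := rfl
  refine ⟨⟨?_, ?_⟩, convex_setOf_mFun_le u IsAffineFun.snd hxm hym ha hb hab, ?_⟩
  · rw [hfst]; positivity
  · rw [hfst]; nlinarith
  · rw [(isAffineFun_MFun u).map_add_smul hab, hsnd]
    gcongr

lemma zero_mem_Wset : ((0 : ℝ), mFun u 0) ∈ Wset u :=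
  ⟨⟨le_rfl, zero_le_one⟩, le_rfl, (mFun_zero u).le⟩

lemma one_mem_Wset : ((1 : ℝ), mFun u 1) ∈ Wset u :=
  ⟨⟨zero_le_one, le_rfl⟩, le_rfl, (mFun_one u).le⟩

def obedientSet (δ : ℝ) (a : A) : Set (ℝ × ℝ) :=
  Wset u ∩ {z | mFun u z.1 ≤ agentValue u δ a z}

lemma convex_obedientSet (δ : ℝ) (a : A) : Convex ℝ (obedientSet u δ a) :=
  (convex_Wset u).inter (convex_setOf_mFun_le u (isAffineFun_agentValue u δ a))

lemma agentValue_le_snd {δ : ℝ} (hδ : δ ≤ 1) (a : A) {z : ℝ × ℝ} (hz : z ∈ Wset u) :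
    agentValue u δ a z ≤ z.2 := by
  have h := (euP_le_mFun u a z.1).trans hz.2.1
  rw [agentValue]
  nlinarith

lemma mem_obedientSet_bestResponse (δ : ℝ) {z : ℝ × ℝ} (hz : z ∈ Wset u)
    (hm : z.2 = mFun u z.1) : z ∈ obedientSet u δ (bestResponse u z.1) := by
  refine ⟨hz, ?_⟩
  show mFun u z.1 ≤ (1 - δ) * euP u (bestResponse u z.1) z.1 + δ * z.2
  rw [euP_bestResponse, hm]
  linarith

end StaticPayoffs

namespace Fam

variable {A ι κ : Type*}

def point (f : Fam A ι) (i : ι) : ℝ × ℝ := (f.belief i, f.promise i)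

def wsum [Fintype ι] (f : Fam A ι) (H : A → ℝ × ℝ → ℝ) : ℝ :=
  ∑ i, f.prob i * H (f.act i) (f.point i)

def mix (a b : ℝ) (f : Fam A ι) (g : Fam A κ) : Fam A (ι ⊕ κ) where
  prob := Sum.elim (fun i => a * f.prob i) (fun j => b * g.prob j)
  belief := Sum.elim f.belief g.belief
  promise := Sum.elim f.promise g.promise
  act := Sum.elim f.act g.act

def splice [DecidableEq ι] (f : Fam A ι) (i : ι) (g : Fam A κ) : Fam A (ι ⊕ κ) where
  prob := Sum.elim (Function.update f.prob i 0) (fun j => f.prob i * g.prob j)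
  belief := Sum.elim f.belief g.belief
  promise := Sum.elim f.promise g.promise
  act := Sum.elim f.act g.act

variable [Fintype ι] [Fintype κ] (f : Fam A ι)

lemma wsum_one : f.wsum (fun _ _ => 1) = ∑ i, f.prob i := by
  simp [wsum]

lemma wsum_add (H K : A → ℝ × ℝ → ℝ) :
    f.wsum (fun a z => H a z + K a z) = f.wsum H + f.wsum K := by
  simp only [wsum, mul_add, sum_add_distrib]

lemma wsum_const_mul (r : ℝ) (H : A → ℝ × ℝ → ℝ) :
    f.wsum (fun a z => r * H a z) = r * f.wsum H := by
  simp only [wsum, mul_sum, mul_left_comm r]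

lemma wsum_mono (hf : ∀ i, 0 ≤ f.prob i) {H K : A → ℝ × ℝ → ℝ}
    (h : ∀ i, H (f.act i) (f.point i) ≤ K (f.act i) (f.point i)) : f.wsum H ≤ f.wsum K :=
  sum_le_sum fun i _ => mul_le_mul_of_nonneg_left (h i) (hf i)

lemma famPayoff_eq_wsum (v : A → Bool → ℝ) (δ : ℝ) (V : ℝ × ℝ → ℝ) :
    famPayoff v δ V f
      = f.wsum (fun a z => (1 - δ) * euP v a z.1) + δ * f.wsum (fun _ z => V z) := by
  rw [← wsum_const_mul, ← wsum_add]
  rfl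

lemma wsum_mix (a b : ℝ) (g : Fam A κ) (H : A → ℝ × ℝ → ℝ) :
    (f.mix a b g).wsum H = a * f.wsum H + b * g.wsum H := by
  simp only [wsum, point, mix, Fintype.sum_sum_type, Sum.elim_inl, Sum.elim_inr, mul_sum,
    mul_assoc]

lemma famPayoff_mix (v : A → Bool → ℝ) (δ : ℝ) (V : ℝ × ℝ → ℝ) (a b : ℝ) (g : Fam A κ) :
    famPayoff v δ V (f.mix a b g) = a * famPayoff v δ V f + b * famPayoff v δ V g :=
  f.wsum_mix a b g fun a z => (1 - δ) * euP v a z.1 + δ * V z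

lemma wsum_splice [DecidableEq ι] (i : ι) (g : Fam A κ) (H : A → ℝ × ℝ → ℝ) :
    (f.splice i g).wsum H
      = f.wsum H - f.prob i * H (f.act i) (f.point i) + f.prob i * g.wsum H := by
  have herase : ∀ j, Function.update f.prob i 0 j * H (f.act j) (f.point j)
      = f.prob j * H (f.act j) (f.point j)
        - if j = i then f.prob i * H (f.act i) (f.point i) else 0 := by
    intro j
    rcases eq_or_ne j i with rfl | hj <;> simp [*]
  simp only [wsum, splice, point, Fintype.sum_sum_type, Sum.elim_inl, Sum.elim_inr] at herase ⊢
  rw [sum_congr rfl fun j _ => herase j, sum_sub_distrib, sum_ite_eq']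
  simp only [mem_univ, if_true, mul_sum, mul_assoc]

lemma famPayoff_splice [DecidableEq ι] (v : A → Bool → ℝ) (δ : ℝ) (V : ℝ × ℝ → ℝ) (i : ι)
    (g : Fam A κ) :
    famPayoff v δ V (f.splice i g) = famPayoff v δ V f
      - f.prob i * ((1 - δ) * euP v (f.act i) (f.belief i) + δ * V (f.point i))
      + f.prob i * famPayoff v δ V g :=
  f.wsum_splice i g fun a z => (1 - δ) * euP v a z.1 + δ * V z

end Fam

lemma feasible_iff {A ι : Type*} [Fintype A] [Nonempty A] [Fintype ι] {u : A → Bool → ℝ}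
    {δ : ℝ} {z : ℝ × ℝ} {f : Fam A ι} :
    Feasible u δ z f ↔ (∀ i, 0 ≤ f.prob i) ∧ ∑ i, f.prob i = 1 ∧
      (∀ i, f.point i ∈ obedientSet u δ (f.act i)) ∧ z.2 ≤ f.wsum (agentValue u δ) ∧
      f.wsum (fun _ x => x.1) = z.1 := by
  constructor
  · rintro ⟨hp, hW, hO, hPK, hB, hT⟩
    exact ⟨fun i => (hp i).1, hT, fun i => ⟨hW i, hO i⟩, hPK, hB⟩
  · rintro ⟨hp, hT, hO, hPK, hB⟩
    refine ⟨fun i => ⟨hp i, ?_⟩, fun i => (hO i).1, fun i => (hO i).2, hPK, hB, hT⟩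
    exact hT ▸ single_le_sum (fun j _ => hp j) (mem_univ i)

section MixSplice

variable {A ι κ : Type*} [Fintype A] [Nonempty A] [Fintype ι] [Fintype κ] {u : A → Bool → ℝ}
  {δ : ℝ}

lemma Feasible.mix {a b : ℝ} (ha : 0 ≤ a) (hb : 0 ≤ b) (hab : a + b = 1) {x y : ℝ × ℝ}
    {f : Fam A ι} {g : Fam A κ} (hf : Feasible u δ x f) (hg : Feasible u δ y g) :
    Feasible u δ (a • x + b • y) (f.mix a b g) := by
  obtain ⟨hf0, hf1, hfO, hfPK, hfB⟩ := feasible_iff.1 hf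
  obtain ⟨hg0, hg1, hgO, hgPK, hgB⟩ := feasible_iff.1 hg
  refine feasible_iff.2 ⟨?_, ?_, ?_, ?_, ?_⟩
  · rintro (i | j)
    exacts [mul_nonneg ha (hf0 i), mul_nonneg hb (hg0 j)]
  · rw [← Fam.wsum_one, Fam.wsum_mix, Fam.wsum_one, Fam.wsum_one, hf1, hg1, mul_one, mul_one,
      hab]
  · rintro (i | j)
    exacts [hfO i, hgO j]
  · rw [Fam.wsum_mix]
    show a * x.2 + b * y.2 ≤ _
    gcongr
  · rw [Fam.wsum_mix, hfB, hgB]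
    rfl

lemma Feasible.splice [DecidableEq ι] (hδ : δ ≤ 1) {z : ℝ × ℝ} {f : Fam A ι} {g : Fam A κ}
    (hf : Feasible u δ z f) (i : ι) (hg : Feasible u δ (f.point i) g) :
    Feasible u δ z (f.splice i g) := by
  obtain ⟨hf0, hf1, hfO, hfPK, hfB⟩ := feasible_iff.1 hf
  obtain ⟨hg0, hg1, hgO, hgPK, hgB⟩ := feasible_iff.1 hg
  refine feasible_iff.2 ⟨?_, ?_, ?_, ?_, ?_⟩
  · rintro (j | j)
    · rcases eq_or_ne j i with rfl | hj
      · simp [Fam.splice]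
      · simpa [Fam.splice, hj] using hf0 j
    · exact mul_nonneg (hf0 i) (hg0 j)
  · rw [← Fam.wsum_one, Fam.wsum_splice, Fam.wsum_one, Fam.wsum_one, hf1, hg1]
    ring
  · rintro (j | j)
    exacts [hfO j, hgO j]
  · have hi : agentValue u δ (f.act i) (f.point i) ≤ g.wsum (agentValue u δ) :=
      (agentValue_le_snd u hδ _ (hfO i).1).trans hgPK
    rw [Fam.wsum_splice]
    nlinarith [hf0 i]
  · rw [Fam.wsum_splice, hfB, hgB]
    ring

end MixSplice

namespace Fam

variable {A ι S : Type*} [Fintype ι] [DecidableEq S]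

def fiber (g : Fam A ι) (e : A ↪ S) (s : S) : Finset ι := {i | e (g.act i) = s}

def fiberWeight (g : Fam A ι) (e : A ↪ S) (s : S) : ℝ := ∑ i ∈ g.fiber e s, g.prob i

-- Signals of zero weight get the point `(0, m 0)` with a best response there, which is obedient.
def compress [Fintype A] [Nonempty A] (g : Fam A ι) (u : A → Bool → ℝ) (e : A ↪ S) :
    Fam A S where
  prob := g.fiberWeight e
  belief s := (if g.fiberWeight e s = 0 then (0, mFun u 0)
    else (g.fiber e s).centerMass g.prob g.point).1
  promise s := (if g.fiberWeight e s = 0 then (0, mFun u 0)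
    else (g.fiber e s).centerMass g.prob g.point).2
  act s := if g.fiberWeight e s = 0 then bestResponse u 0 else Function.invFun e s

variable {e : A ↪ S} {g : Fam A ι}

lemma act_eq_invFun_of_mem_fiber [Nonempty A] {s : S} {i : ι} (hi : i ∈ g.fiber e s) :
    g.act i = Function.invFun e s := by
  rw [← (mem_filter.1 hi).2, Function.leftInverse_invFun e.injective]

lemma sum_fiber_eq_zero (hg : ∀ i, 0 ≤ g.prob i) {s : S} (hs : g.fiberWeight e s = 0)
    (H : ι → ℝ) : ∑ i ∈ g.fiber e s, g.prob i * H i = 0 :=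
  sum_eq_zero fun i hi => by
    rw [(sum_eq_zero_iff_of_nonneg fun j _ => hg j).1 hs i hi, zero_mul]

section Merge

variable [Fintype A] [Nonempty A] {u : A → Bool → ℝ} {s : S}

lemma compress_point_of_eq_zero (hs : g.fiberWeight e s = 0) :
    (g.compress u e).point s = (0, mFun u 0) := by
  simp [compress, point, hs]

lemma compress_act_of_eq_zero (hs : g.fiberWeight e s = 0) :
    (g.compress u e).act s = bestResponse u 0 := by
  simp [compress, hs]

lemma compress_point_of_ne_zero (hs : g.fiberWeight e s ≠ 0) :
    (g.compress u e).point s = (g.fiber e s).centerMass g.prob g.point := by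
  simp [compress, point, hs]

lemma compress_act_of_ne_zero (hs : g.fiberWeight e s ≠ 0) :
    (g.compress u e).act s = Function.invFun e s := by
  simp [compress, hs]

lemma compress_point_mem_obedientSet {δ : ℝ} (hg : ∀ i, 0 ≤ g.prob i)
    (hgO : ∀ i, g.point i ∈ obedientSet u δ (g.act i)) (s : S) :
    (g.compress u e).point s ∈ obedientSet u δ ((g.compress u e).act s) := by
  by_cases hs : g.fiberWeight e s = 0
  · rw [compress_point_of_eq_zero hs, compress_act_of_eq_zero hs]
    exact mem_obedientSet_bestResponse (z := (0, mFun u 0)) u δ (zero_mem_Wset u) rfl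
  · have hpos : 0 < g.fiberWeight e s := (sum_nonneg fun i _ => hg i).lt_of_ne' hs
    rw [compress_point_of_ne_zero hs, compress_act_of_ne_zero hs]
    refine (convex_obedientSet u δ _).centerMass_mem (fun i _ => hg i) hpos fun i hi => ?_
    have hi' := hgO i
    rwa [act_eq_invFun_of_mem_fiber hi] at hi'

end Merge

variable [Fintype S]

lemma sum_fiberWeight : ∑ s, g.fiberWeight e s = ∑ i, g.prob i :=
  sum_fiberwise univ _ _

lemma wsum_eq_sum_fiber (H : A → ℝ × ℝ → ℝ) :
    g.wsum H = ∑ s, ∑ i ∈ g.fiber e s, g.prob i * H (g.act i) (g.point i) :=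
  (sum_fiberwise univ _ _).symm

variable [Fintype A] [Nonempty A] {u : A → Bool → ℝ}

lemma wsum_compress (hg : ∀ i, 0 ≤ g.prob i) {H : A → ℝ × ℝ → ℝ}
    (hH : ∀ a, IsAffineFun (H a)) : (g.compress u e).wsum H = g.wsum H := by
  rw [wsum_eq_sum_fiber (e := e) (g := g)]
  refine sum_congr rfl fun s _ => ?_
  show g.fiberWeight e s * H ((g.compress u e).act s) ((g.compress u e).point s) = _
  by_cases hs : g.fiberWeight e s = 0
  · rw [sum_fiber_eq_zero hg hs, hs, zero_mul]
  · have hact : ∀ i ∈ g.fiber e s, g.prob i * H (g.act i) (g.point i)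
        = g.prob i * H (Function.invFun e s) (g.point i) := fun i hi => by
      rw [act_eq_invFun_of_mem_fiber hi]
    rw [sum_congr rfl hact, ← (hH _).sum_mul_map_centerMass g.point hs,
      compress_act_of_ne_zero hs, compress_point_of_ne_zero hs]
    rfl

lemma wsum_le_wsum_compress (hg : ∀ i, 0 ≤ g.prob i) {V : ℝ × ℝ → ℝ}
    (hV : ConcaveOn ℝ (Wset u) V) (hgW : ∀ i, g.point i ∈ Wset u) :
    g.wsum (fun _ z => V z) ≤ (g.compress u e).wsum (fun _ z => V z) := by
  rw [wsum_eq_sum_fiber (e := e) (g := g)]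
  refine sum_le_sum fun s _ => ?_
  show _ ≤ g.fiberWeight e s * V ((g.compress u e).point s)
  by_cases hs : g.fiberWeight e s = 0
  · rw [sum_fiber_eq_zero hg hs, hs, zero_mul]
  · have hpos : 0 < g.fiberWeight e s := (sum_nonneg fun i _ => hg i).lt_of_ne' hs
    have hJensen := hV.le_map_centerMass (fun i _ => hg i) hpos fun i _ => hgW i
    rw [centerMass, smul_eq_mul] at hJensen
    rw [compress_point_of_ne_zero hs]
    simpa only [smul_eq_mul, Function.comp_apply] using (inv_mul_le_iff₀ hpos).1 hJensen

end Fam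

def fullReveal {A : Type*} [Fintype A] [Nonempty A] (u : A → Bool → ℝ) (p : ℝ) :
    Fam A Bool where
  prob b := if b then p else 1 - p
  belief b := if b then 1 else 0
  promise b := if b then mFun u 1 else mFun u 0
  act b := if b then bestResponse u 1 else bestResponse u 0

section Compress

variable {A ι S : Type*} [Fintype A] [Nonempty A] [Fintype ι] [Fintype S] {u : A → Bool → ℝ}
  {δ : ℝ} {z : ℝ × ℝ}

lemma Feasible.compress [DecidableEq S] {g : Fam A ι} (hg : Feasible u δ z g) (e : A ↪ S) :
    Feasible u δ z (g.compress u e) := by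
  obtain ⟨hg0, hg1, hgO, hgPK, hgB⟩ := feasible_iff.1 hg
  refine feasible_iff.2 ⟨fun s => sum_nonneg fun i _ => hg0 i,
    Fam.sum_fiberWeight.trans hg1, Fam.compress_point_mem_obedientSet hg0 hgO, ?_, ?_⟩
  · rwa [Fam.wsum_compress hg0 (isAffineFun_agentValue u δ)]
  · rwa [Fam.wsum_compress hg0 fun _ => IsAffineFun.fst]

lemma famPayoff_le_famPayoff_compress [DecidableEq S] (v : A → Bool → ℝ) (hδ : 0 ≤ δ)
    {V : ℝ × ℝ → ℝ} (hV : ConcaveOn ℝ (Wset u) V) {g : Fam A ι} (hg : Feasible u δ z g)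
    (e : A ↪ S) : famPayoff v δ V g ≤ famPayoff v δ V (g.compress u e) := by
  obtain ⟨hg0, -, hgO, -, -⟩ := feasible_iff.1 hg
  rw [Fam.famPayoff_eq_wsum, Fam.famPayoff_eq_wsum,
    Fam.wsum_compress hg0 fun a => (isAffineFun_euP v a).const_mul (1 - δ)]
  gcongr
  exact Fam.wsum_le_wsum_compress hg0 hV fun i => (hgO i).1

lemma feasible_fullReveal (hz : z ∈ Wset u) : Feasible u δ z (fullReveal u z.1) := by
  obtain ⟨⟨hz₀, hz₁⟩, -, hzM⟩ := hz
  refine feasible_iff.2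
    ⟨?_, by simp [fullReveal], ?_, ?_, by simp [Fam.wsum, fullReveal, Fam.point]⟩
  · rintro (_ | _) <;> simp [fullReveal] <;> linarith
  · rintro (_ | _)
    · exact mem_obedientSet_bestResponse (z := (0, mFun u 0)) u δ (zero_mem_Wset u) rfl
    · exact mem_obedientSet_bestResponse (z := (1, mFun u 1)) u δ (one_mem_Wset u) rfl
  · simp only [Fam.wsum, fullReveal, Fam.point, agentValue, Fintype.sum_bool, if_true,
      Bool.false_eq_true, if_false, euP_bestResponse]
    rw [mFun_zero, mFun_one]
    simp only [MFun] at hzM ⊢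
    linarith

lemma exists_feasible (e : A ↪ S) (hz : z ∈ Wset u) : ∃ f : Fam A S, Feasible u δ z f := by
  classical
  exact ⟨_, (feasible_fullReveal hz).compress e⟩

end Compress

section Bellman

variable {A S : Type*} [Fintype A] [Nonempty A] [Fintype S] {u v : A → Bool → ℝ} {δ : ℝ}
  {V V' : ℝ × ℝ → ℝ} {z : ℝ × ℝ}

lemma abs_famPayoff_le {C : ℝ} (hC : ∀ z ∈ Wset u, |V z| ≤ C) {f : Fam A S}
    (hf : Feasible u δ z f) :
    |famPayoff v δ V f| ≤ |1 - δ| * ∑ b, (|v b false| + |v b true|) + |δ| * C := by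
  obtain ⟨hf0, hf1, hfO, -, -⟩ := feasible_iff.1 hf
  have hterm : ∀ s, |(1 - δ) * euP v (f.act s) (f.belief s) + δ * V (f.point s)|
      ≤ |1 - δ| * ∑ b, (|v b false| + |v b true|) + |δ| * C := fun s => by
    refine (abs_add_le _ _).trans ?_
    rw [abs_mul, abs_mul]
    gcongr
    exacts [abs_euP_le v _ (hfO s).1.1, hC _ (hfO s).1]
  calc |famPayoff v δ V f|
      ≤ ∑ s, f.prob s * |(1 - δ) * euP v (f.act s) (f.belief s) + δ * V (f.point s)| := by
        refine (abs_sum_le_sum_abs _ _).trans_eq (sum_congr rfl fun s _ => ?_)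
        rw [abs_mul, abs_of_nonneg (hf0 s)]
        rfl
    _ ≤ ∑ s, f.prob s * (|1 - δ| * ∑ b, (|v b false| + |v b true|) + |δ| * C) :=
        sum_le_sum fun s _ => mul_le_mul_of_nonneg_left (hterm s) (hf0 s)
    _ = _ := by rw [← sum_mul, hf1, one_mul]

lemma le_bellman (hV : BddOnW u V) {f : Fam A S} (hf : Feasible u δ z f) :
    famPayoff v δ V f ≤ bellman (S := S) u v δ V z := by
  obtain ⟨C, hC⟩ := hV
  refine le_csSup ⟨|1 - δ| * ∑ b, (|v b false| + |v b true|) + |δ| * C, ?_⟩ ⟨f, hf, rfl⟩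
  rintro _ ⟨g, hg, rfl⟩
  exact (le_abs_self _).trans (abs_famPayoff_le hC hg)

lemma bellman_le (hne : ∃ f : Fam A S, Feasible u δ z f) {c : ℝ}
    (h : ∀ f : Fam A S, Feasible u δ z f → famPayoff v δ V f ≤ c) :
    bellman (S := S) u v δ V z ≤ c := by
  obtain ⟨f, hf⟩ := hne
  refine csSup_le ?_ ?_
  · exact ⟨_, f, hf, rfl⟩
  · rintro _ ⟨g, hg, rfl⟩
    exact h g hg

lemma exists_lt_famPayoff (hne : ∃ f : Fam A S, Feasible u δ z f) {c : ℝ}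
    (h : c < bellman (S := S) u v δ V z) :
    ∃ f : Fam A S, Feasible u δ z f ∧ c < famPayoff v δ V f := by
  obtain ⟨f, hf⟩ := hne
  obtain ⟨_, ⟨g, hg, rfl⟩, hlt⟩ := exists_lt_of_lt_csSup
    (s := {x | ∃ f : Fam A S, Feasible u δ z f ∧ x = famPayoff v δ V f}) ⟨_, f, hf, rfl⟩ h
  exact ⟨g, hg, hlt⟩

lemma BddOnW.bellman (e : A ↪ S) (hV : BddOnW u V) :
    BddOnW u (bellman (S := S) u v δ V) := by
  obtain ⟨C, hC⟩ := hV
  refine ⟨|1 - δ| * ∑ b, (|v b false| + |v b true|) + |δ| * C,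
    fun z hz => abs_le.2 ⟨?_, ?_⟩⟩
  · obtain ⟨f, hf⟩ := exists_feasible e hz
    exact (abs_le.1 (abs_famPayoff_le hC hf)).1.trans (le_bellman ⟨C, hC⟩ hf)
  · exact bellman_le (exists_feasible e hz) fun f hf => (abs_le.1 (abs_famPayoff_le hC hf)).2

lemma bellman_le_bellman_add (hδ : 0 ≤ δ) (hne : ∃ f : Fam A S, Feasible u δ z f)
    (hV' : BddOnW u V') {d : ℝ} (hd : ∀ z ∈ Wset u, V z ≤ V' z + d) :
    bellman (S := S) u v δ V z ≤ bellman (S := S) u v δ V' z + δ * d := by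
  refine bellman_le hne fun f hf => ?_
  obtain ⟨hf0, hf1, hfO, -, -⟩ := feasible_iff.1 hf
  have hsum : f.wsum (fun _ z => V z) ≤ f.wsum (fun _ z => V' z) + d := by
    calc f.wsum (fun _ z => V z) ≤ f.wsum (fun _ z => V' z + d * 1) :=
          f.wsum_mono hf0 fun s => by simpa using hd _ (hfO s).1
      _ = _ := by rw [Fam.wsum_add, Fam.wsum_const_mul, Fam.wsum_one, hf1, mul_one]
  have hP := le_bellman (v := v) hV' hf
  rw [Fam.famPayoff_eq_wsum] at hP ⊢
  nlinarith

lemma abs_bellman_sub_le (e : A ↪ S) (hδ : 0 ≤ δ) (hV : BddOnW u V) (hV' : BddOnW u V')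
    {d : ℝ} (hd : ∀ z ∈ Wset u, |V z - V' z| ≤ d) (hz : z ∈ Wset u) :
    |bellman (S := S) u v δ V z - bellman (S := S) u v δ V' z| ≤ δ * d := by
  have h₁ := bellman_le_bellman_add (v := v) (V := V) (d := d) hδ (exists_feasible e hz) hV'
    fun z hz => by linarith [(abs_le.1 (hd z hz)).2]
  have h₂ := bellman_le_bellman_add (v := v) (V := V') (d := d) hδ (exists_feasible e hz) hV
    fun z hz => by linarith [(abs_le.1 (hd z hz)).1]
  exact abs_sub_le_iff.2 ⟨by linarith, by linarith⟩

lemma ConcaveOn.bellman (e : A ↪ S) (hδ : 0 ≤ δ) (hVb : BddOnW u V)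
    (hV : ConcaveOn ℝ (Wset u) V) : ConcaveOn ℝ (Wset u) (bellman (S := S) u v δ V) := by
  classical
  refine ⟨convex_Wset u, fun x hx y hy a b ha hb hab => le_of_forall_pos_le_add fun ε hε => ?_⟩
  obtain ⟨f, hf, hfε⟩ := exists_lt_famPayoff (v := v) (V := V) (exists_feasible (δ := δ) e hx)
    (sub_lt_self _ hε)
  obtain ⟨g, hg, hgε⟩ := exists_lt_famPayoff (v := v) (V := V) (exists_feasible (δ := δ) e hy)
    (sub_lt_self _ hε)
  have hmix := hf.mix ha hb hab hg
  have hP := (famPayoff_le_famPayoff_compress v hδ hV hmix e).trans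
    (le_bellman hVb (hmix.compress e))
  rw [Fam.famPayoff_mix] at hP
  simp only [smul_eq_mul]
  nlinarith [mul_le_mul_of_nonneg_left hfε.le ha, mul_le_mul_of_nonneg_left hgε.le hb]

lemma bellman_nonneg (e : A ↪ S) (hv : ∀ a b, 0 ≤ v a b) (hδ₀ : 0 ≤ δ) (hδ₁ : δ ≤ 1)
    (hVb : BddOnW u V) (hV : ∀ z ∈ Wset u, 0 ≤ V z) (hz : z ∈ Wset u) :
    0 ≤ bellman (S := S) u v δ V z := by
  obtain ⟨f, hf⟩ := exists_feasible e hz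
  obtain ⟨hf0, -, hfO, -, -⟩ := feasible_iff.1 hf
  refine le_trans (sum_nonneg fun s _ => mul_nonneg (hf0 s) ?_) (le_bellman hVb hf)
  obtain ⟨⟨hp₀, hp₁⟩, -⟩ := (hfO s).1
  have hflow : 0 ≤ euP v (f.act s) (f.belief s) :=
    add_nonneg (mul_nonneg (sub_nonneg.2 hp₁) (hv _ _)) (mul_nonneg hp₀ (hv _ _))
  exact add_nonneg (mul_nonneg (sub_nonneg.2 hδ₁) hflow) (mul_nonneg hδ₀ (hV _ (hfO s).1))

end Bellman

section ValueIteration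

variable {A S : Type*} [Fintype A] [Nonempty A] [Fintype S] {u v : A → Bool → ℝ} {δ : ℝ}
  {V : ℝ × ℝ → ℝ}

def valueIter (S : Type*) [Fintype S] (u v : A → Bool → ℝ) (δ : ℝ) (n : ℕ) : ℝ × ℝ → ℝ :=
  (bellman (S := S) u v δ)^[n] 0

lemma valueIter_succ (n : ℕ) :
    valueIter S u v δ (n + 1) = bellman (S := S) u v δ (valueIter S u v δ n) :=
  Function.iterate_succ_apply' _ _ _

lemma bddOnW_valueIter (e : A ↪ S) (n : ℕ) : BddOnW u (valueIter S u v δ n) := by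
  induction n with
  | zero => exact ⟨0, fun z _ => by simp [valueIter]⟩
  | succ n ih => rw [valueIter_succ]; exact ih.bellman e

lemma concaveOn_valueIter (e : A ↪ S) (hδ : 0 ≤ δ) (n : ℕ) :
    ConcaveOn ℝ (Wset u) (valueIter S u v δ n) := by
  induction n with
  | zero => exact concaveOn_const 0 (convex_Wset u)
  | succ n ih => rw [valueIter_succ]; exact ih.bellman e hδ (bddOnW_valueIter e n)

lemma valueIter_nonneg (e : A ↪ S) (hv : ∀ a b, 0 ≤ v a b) (hδ₀ : 0 ≤ δ) (hδ₁ : δ ≤ 1)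
    (n : ℕ) : ∀ z ∈ Wset u, 0 ≤ valueIter S u v δ n z := by
  induction n with
  | zero => exact fun z _ => le_rfl
  | succ n ih =>
    rw [valueIter_succ]
    exact fun z hz => bellman_nonneg e hv hδ₀ hδ₁ (bddOnW_valueIter e n) ih hz

lemma abs_sub_valueIter_le (e : A ↪ S) (hδ : 0 ≤ δ) {C : ℝ} (hC : ∀ z ∈ Wset u, |V z| ≤ C)
    (hfix : ∀ z ∈ Wset u, bellman (S := S) u v δ V z = V z) (n : ℕ) :
    ∀ z ∈ Wset u, |V z - valueIter S u v δ n z| ≤ δ ^ n * C := by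
  induction n with
  | zero => simpa [valueIter] using hC
  | succ n ih =>
    intro z hz
    rw [← hfix z hz, valueIter_succ, pow_succ', mul_assoc]
    exact abs_bellman_sub_le e hδ ⟨C, hC⟩ (bddOnW_valueIter e n) ih hz

open Filter Topology in
lemma tendsto_valueIter (e : A ↪ S) (hδ₀ : 0 ≤ δ) (hδ₁ : δ < 1) (hV : BddOnW u V)
    (hfix : ∀ z ∈ Wset u, bellman (S := S) u v δ V z = V z) {z : ℝ × ℝ} (hz : z ∈ Wset u) :
    Tendsto (fun n => valueIter S u v δ n z) atTop (𝓝 (V z)) := by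
  obtain ⟨C, hC⟩ := hV
  have hlim : Tendsto (fun n => δ ^ n * C) atTop (𝓝 0) := by
    simpa using (tendsto_pow_atTop_nhds_zero_of_lt_one hδ₀ hδ₁).mul_const C
  refine tendsto_iff_norm_sub_tendsto_zero.2
    (squeeze_zero (fun n => norm_nonneg _) (fun n => ?_) hlim)
  rw [Real.norm_eq_abs, abs_sub_comm]
  exact abs_sub_valueIter_le e hδ₀ hC hfix n z hz

lemma concaveOn_of_bellman_fixed (e : A ↪ S) (hδ₀ : 0 ≤ δ) (hδ₁ : δ < 1) (hV : BddOnW u V)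
    (hfix : ∀ z ∈ Wset u, bellman (S := S) u v δ V z = V z) : ConcaveOn ℝ (Wset u) V :=
  ConcaveOn.of_tendsto (fun n => concaveOn_valueIter e hδ₀ n) fun _ hz =>
    tendsto_valueIter e hδ₀ hδ₁ hV hfix hz

lemma nonneg_of_bellman_fixed (e : A ↪ S) (hv : ∀ a b, 0 ≤ v a b) (hδ₀ : 0 ≤ δ)
    (hδ₁ : δ < 1) (hV : BddOnW u V) (hfix : ∀ z ∈ Wset u, bellman (S := S) u v δ V z = V z)
    {z : ℝ × ℝ} (hz : z ∈ Wset u) : 0 ≤ V z :=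
  ge_of_tendsto' (tendsto_valueIter e hδ₀ hδ₁ hV hfix hz) fun n =>
    valueIter_nonneg e hv hδ₀ hδ₁.le n z hz

end ValueIteration

theorem optimal_family_zero_value_off_astar_general
    {A S : Type*} [Fintype A] [Nonempty A] [Fintype S]
    (u v : A → Bool → ℝ) (δ : ℝ) (astar : A)
    (hδ : δ ∈ Set.Ioo (0 : ℝ) 1)
    (hAS : Fintype.card A ≤ Fintype.card S)
    (hv0 : 0 < v astar false) (hv1 : 0 < v astar true)
    (hvz : ∀ a : A, a ≠ astar → v a false = 0 ∧ v a true = 0)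
    (Vstar : ℝ × ℝ → ℝ) (hVb : BddOnW u Vstar)
    (hVfix : ∀ pw ∈ Wset u, bellman (S := S) u v δ Vstar pw = Vstar pw)
    (pw : ℝ × ℝ) (f : Fam A S)
    (hfeas : Feasible u δ pw f)
    (hopt : famPayoff v δ Vstar f = bellman (S := S) u v δ Vstar pw) :
    ∀ s : S, 0 < f.prob s → f.act s ≠ astar → Vstar (f.belief s, f.promise s) = 0 := by
  classical
  obtain ⟨hδ₀, hδ₁⟩ := hδ
  obtain ⟨e⟩ := Function.Embedding.nonempty_of_card_le hAS
  have hv : ∀ a b, 0 ≤ v a b := fun a b => by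
    by_cases ha : a = astar
    · subst ha; cases b; exacts [hv0.le, hv1.le]
    · cases b <;> simp [hvz a ha]
  intro s hs hact
  change Vstar (f.point s) = 0
  have hq : f.point s ∈ Wset u := ((feasible_iff.1 hfeas).2.2.1 s).1
  refine le_antisymm (not_lt.1 fun hpos => ?_)
    (nonneg_of_bellman_fixed e hv hδ₀.le hδ₁ hVb hVfix hq)
  obtain ⟨g, hg, hgpay⟩ := exists_lt_famPayoff (exists_feasible e hq)
    (c := δ * Vstar (f.point s)) (by rw [hVfix _ hq]; nlinarith [mul_pos (sub_pos.2 hδ₁) hpos])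
  have hsplice := hfeas.splice hδ₁.le s hg
  have hP := (famPayoff_le_famPayoff_compress v hδ₀.le
    (concaveOn_of_bellman_fixed e hδ₀.le hδ₁ hVb hVfix) hsplice e).trans
    (le_bellman hVb (hsplice.compress e))
  have hflow : euP v (f.act s) (f.belief s) = 0 := by simp [euP, hvz _ hact]
  rw [Fam.famPayoff_splice, hflow, ← hopt] at hP
  nlinarith [mul_lt_mul_of_pos_left hgpay hs]

/-- at an optimal family, any signal sent with positive probability whose
recommended action differs from `a*` gives the principal a zero continuation value. -/
theorem optimal_family_zero_value_off_astar
    {A S : Type*} [Fintype A] [Nonempty A] [Fintype S]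
    (u v : A → Bool → ℝ) (δ : ℝ) (astar : A)
    (hδ : δ ∈ Set.Ioo (0 : ℝ) 1)
    (hS2 : 2 ≤ Fintype.card S) (hAS : Fintype.card A ≤ Fintype.card S)
    (hv0 : 0 < v astar false) (hv1 : 0 < v astar true)
    (hvz : ∀ a : A, a ≠ astar → v a false = 0 ∧ v a true = 0)
    (Vstar : ℝ × ℝ → ℝ) (hVb : BddOnW u Vstar)
    (hVfix : ∀ pw ∈ Wset u, bellman (S := S) u v δ Vstar pw = Vstar pw)
    (pw : ℝ × ℝ) (hpw : pw ∈ Wset u) (f : Fam A S)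
    (hfeas : Feasible u δ pw f)
    (hopt : famPayoff v δ Vstar f = bellman (S := S) u v δ Vstar pw) :
    ∀ s : S, 0 < f.prob s → f.act s ≠ astar → Vstar (f.belief s, f.promise s) = 0 :=
  optimal_family_zero_value_off_astar_general u v δ astar hδ hAS hv0 hv1 hvz Vstar hVb hVfix pw f
    hfeas hopt
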